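/- Let x ∈ ℝⁿ be such that the flow S_t x is defined and f(S_t x) ≠ 0 for all t ≥ 0, and define Ã(t,x) := Df(S_t x) − (f(S_t x) f(S_t x)^T/‖f(S_t x)‖²)(Df(S_t x)^T + Df(S_t x)). If φ is a solution of the variational equation φ̇(t) = Df(S_t x)φ(t), then ψ(t) := P_{S_t x} φ(t) satisfies ψ̇(t) = Ã(t,x) ψ(t) for all t ≥ 0. -/

import Mathlib

open Matrix Set Filter MeasureTheory

/-- Euclidean norm of a vector in `ℝⁿ`. -/
noncomputable def enorm' {n : ℕ} (v : Fin n → ℝ) : ℝ := Real.sqrt (∑ i, v i ^ 2)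

/-- Operator norm of a matrix induced by the Euclidean norm. -/
noncomputable def opn {n : ℕ} (A : Matrix (Fin n) (Fin n) ℝ) : ℝ :=
  ‖Matrix.toEuclideanCLM (𝕜 := ℝ) A‖

/-- The projection `P_x = I - f(x)f(x)ᵀ/‖f(x)‖²` onto the hyperplane perpendicular to `f(x)`. -/
noncomputable def Pm {n : ℕ} (f : (Fin n → ℝ) → Fin n → ℝ) (x : Fin n → ℝ) :
    Matrix (Fin n) (Fin n) ℝ :=
  1 - (enorm' (f x) ^ 2)⁻¹ • Matrix.vecMulVec (f x) (f x)

/-- The differential operator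
`LM(x) = M′(x) + Df(x)ᵀM(x) + M(x)Df(x) - M(x)f(x)f(x)ᵀ(Df(x)+Df(x)ᵀ)/‖f(x)‖²
  - (Df(x)+Df(x)ᵀ)f(x)f(x)ᵀM(x)/‖f(x)‖²`,
where the orbital derivative `M′(x)` has entries `∇M_ij(x) ⋅ f(x)`. -/
noncomputable def LMop {n : ℕ} (f : (Fin n → ℝ) → Fin n → ℝ)
    (Df M : (Fin n → ℝ) → Matrix (Fin n) (Fin n) ℝ) (x : Fin n → ℝ) :
    Matrix (Fin n) (Fin n) ℝ :=
  (Matrix.of fun i j => fderiv ℝ (fun y => M y i j) x (f x))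
    + (Df x)ᵀ * M x + M x * Df x
    - (enorm' (f x) ^ 2)⁻¹ • (M x * Matrix.vecMulVec (f x) (f x) * (Df x + (Df x)ᵀ))
    - (enorm' (f x) ^ 2)⁻¹ • ((Df x + (Df x)ᵀ) * Matrix.vecMulVec (f x) (f x) * M x)

/-! Write `ψ = φ - c • u` with `u = f ∘ g` and `c = ⟨u, φ⟩ / ‖u‖²`. Since `u` solves the same
variational equation as `φ`, the terms `A φ - c • A u` combine to `A ψ`, leaving
`ψ' = A ψ - c' • u`; and differentiating `c` gives `c' ‖u‖² = ⟨u, (Aᵀ + A) ψ⟩`, which is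
exactly the correction term of `Ã`. -/

theorem enorm'_sq {n : ℕ} (v : Fin n → ℝ) : enorm' v ^ 2 = v ⬝ᵥ v := by
  rw [enorm', Real.sq_sqrt (by positivity)]
  simp only [dotProduct, sq]

theorem Pm_mulVec {n : ℕ} (f : (Fin n → ℝ) → Fin n → ℝ) (y v : Fin n → ℝ) :
    Pm f y *ᵥ v = v - ((f y ⬝ᵥ v) / (f y ⬝ᵥ f y)) • f y := by
  rw [Pm, sub_mulVec, one_mulVec, smul_mulVec, vecMulVec_mulVec, op_smul_eq_smul, smul_smul,
    enorm'_sq, div_eq_inv_mul]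

theorem HasDerivWithinAt.dotProduct {𝕜 ι : Type*} [NontriviallyNormedField 𝕜] [Fintype ι]
    {u v : 𝕜 → ι → 𝕜} {u' v' : ι → 𝕜} {s : Set 𝕜} {t : 𝕜}
    (hu : HasDerivWithinAt u u' s t) (hv : HasDerivWithinAt v v' s t) :
    HasDerivWithinAt (fun τ => u τ ⬝ᵥ v τ) (u' ⬝ᵥ v t + u t ⬝ᵥ v') s t :=
  (HasDerivWithinAt.fun_sum fun i _ =>
    (hasDerivWithinAt_pi.mp hu i).fun_mul (hasDerivWithinAt_pi.mp hv i)).congr_deriv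
    Finset.sum_add_distrib

section ProjectedLinearFlow

variable {ι : Type*} [Fintype ι] {A : Matrix ι ι ℝ} {u φ : ℝ → ι → ℝ} {s : Set ℝ} {t : ℝ}

theorem hasDerivWithinAt_dotProduct_div_dotProduct_self
    (hu : HasDerivWithinAt u (A *ᵥ u t) s t) (hφ : HasDerivWithinAt φ (A *ᵥ φ t) s t)
    (hut : u t ≠ 0) :
    HasDerivWithinAt (fun τ => (u τ ⬝ᵥ φ τ) / (u τ ⬝ᵥ u τ))
      ((u t ⬝ᵥ (Aᵀ + A) *ᵥ (φ t - ((u t ⬝ᵥ φ t) / (u t ⬝ᵥ u t)) • u t)) / (u t ⬝ᵥ u t))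
      s t := by
  have hr : u t ⬝ᵥ u t ≠ 0 := fun h => hut (dotProduct_self_eq_zero.mp h)
  refine ((hu.dotProduct hφ).div (hu.dotProduct hu) hr).congr_deriv ?_
  simp only [add_mulVec, mulVec_sub, mulVec_smul, dotProduct_add, dotProduct_sub,
    dotProduct_smul, dotProduct_transpose_mulVec, smul_eq_mul, dotProduct_comm (A *ᵥ u t)]
  field_simp

theorem hasDerivWithinAt_sub_proj_of_linear
    (hu : HasDerivWithinAt u (A *ᵥ u t) s t) (hφ : HasDerivWithinAt φ (A *ᵥ φ t) s t)
    (hut : u t ≠ 0) :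
    HasDerivWithinAt (fun τ => φ τ - ((u τ ⬝ᵥ φ τ) / (u τ ⬝ᵥ u τ)) • u τ)
      ((A - (u t ⬝ᵥ u t)⁻¹ • (vecMulVec (u t) (u t) * (Aᵀ + A))) *ᵥ
        (φ t - ((u t ⬝ᵥ φ t) / (u t ⬝ᵥ u t)) • u t)) s t := by
  have hc := hasDerivWithinAt_dotProduct_div_dotProduct_self hu hφ hut
  refine (hφ.sub (hc.smul hu)).congr_deriv ?_
  rw [sub_mulVec, smul_mulVec, ← mulVec_mulVec, vecMulVec_mulVec, op_smul_eq_smul, smul_smul,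
    mulVec_sub A, mulVec_smul]
  module

end ProjectedLinearFlow

theorem stmt16_general {n : ℕ} (f : (Fin n → ℝ) → Fin n → ℝ)
    (Df : (Fin n → ℝ) → Matrix (Fin n) (Fin n) ℝ)
    (hDf : ∀ y, HasFDerivAt f (LinearMap.toContinuousLinearMap ((Df y).mulVecLin)) y)
    -- `g t = S_t x` is the forward trajectory through `x`
    (g : ℝ → Fin n → ℝ)
    (hg : ∀ t ≥ (0:ℝ), HasDerivWithinAt g (f (g t)) (Set.Ici 0) t)
    (hfg : ∀ t ≥ (0:ℝ), f (g t) ≠ 0)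
    (Atil : ℝ → Matrix (Fin n) (Fin n) ℝ)
    (hAtil : ∀ t, Atil t = Df (g t) -
      (enorm' (f (g t)) ^ 2)⁻¹ •
        (Matrix.vecMulVec (f (g t)) (f (g t)) * ((Df (g t))ᵀ + Df (g t))))
    (φ : ℝ → Fin n → ℝ)
    (hφ : ∀ t ≥ (0:ℝ), HasDerivWithinAt φ ((Df (g t)).mulVec (φ t)) (Set.Ici 0) t)
    (ψ : ℝ → Fin n → ℝ) (hψ : ∀ t, ψ t = (Pm f (g t)).mulVec (φ t)) :
    ∀ t ≥ (0:ℝ), HasDerivWithinAt ψ ((Atil t).mulVec (ψ t)) (Set.Ici 0) t := by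
  intro t ht
  have hfg' : HasDerivWithinAt (fun τ => f (g τ)) (Df (g t) *ᵥ f (g t)) (Ici 0) t :=
    (hDf (g t)).comp_hasDerivWithinAt t (hg t ht)
  have hψ_eq : ψ = fun τ => φ τ - ((f (g τ) ⬝ᵥ φ τ) / (f (g τ) ⬝ᵥ f (g τ))) • f (g τ) :=
    funext fun τ => by rw [hψ, Pm_mulVec]
  rw [hψ_eq, hAtil, enorm'_sq]
  exact hasDerivWithinAt_sub_proj_of_linear hfg' (hφ t ht) (hfg t ht)

/-- if `φ` solves the variational equation `φ̇(t) = Df(S_t x)φ(t)`, then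
`ψ(t) := P_{S_t x} φ(t)` solves `ψ̇(t) = Ã(t,x) ψ(t)` where
`Ã(t,x) = Df(S_t x) − (f(S_t x)f(S_t x)ᵀ/‖f(S_t x)‖²)(Df(S_t x)ᵀ + Df(S_t x))`. -/
theorem stmt16 {n : ℕ} (f : (Fin n → ℝ) → Fin n → ℝ)
    (Df : (Fin n → ℝ) → Matrix (Fin n) (Fin n) ℝ)
    (hf : ContDiff ℝ 1 f)
    (hDf : ∀ y, HasFDerivAt f (LinearMap.toContinuousLinearMap ((Df y).mulVecLin)) y)
    (x : Fin n → ℝ)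
    -- `g t = S_t x` is the forward trajectory through `x`
    (g : ℝ → Fin n → ℝ) (hg0 : g 0 = x)
    (hg : ∀ t ≥ (0:ℝ), HasDerivWithinAt g (f (g t)) (Set.Ici 0) t)
    (hfg : ∀ t ≥ (0:ℝ), f (g t) ≠ 0)
    (Atil : ℝ → Matrix (Fin n) (Fin n) ℝ)
    (hAtil : ∀ t, Atil t = Df (g t) -
      (enorm' (f (g t)) ^ 2)⁻¹ •
        (Matrix.vecMulVec (f (g t)) (f (g t)) * ((Df (g t))ᵀ + Df (g t))))
    (φ : ℝ → Fin n → ℝ)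
    (hφ : ∀ t ≥ (0:ℝ), HasDerivWithinAt φ ((Df (g t)).mulVec (φ t)) (Set.Ici 0) t)
    (ψ : ℝ → Fin n → ℝ) (hψ : ∀ t, ψ t = (Pm f (g t)).mulVec (φ t)) :
    ∀ t ≥ (0:ℝ), HasDerivWithinAt ψ ((Atil t).mulVec (ψ t)) (Set.Ici 0) t :=
  stmt16_general f Df hDf g hg hfg Atil hAtil φ hφ ψ hψ
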